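/- Let λ be a positive integer and τ = (λ + √(λ²+4))/2. The Lebesgue diameter of the constant-word cylinder Δ_k(λ) (all first k partial quotients equal to λ) satisfies (τ/(τ+1)) τ^{−2k} ≤ diam Δ_k(λ) ≤ ((λ²+4)τ/((τ+1)λ²)) τ^{−2k} for every k ≥ 1. -/

import Mathlib

open Real
/-- One step of the Gauss map iteration: `gaussIter n x = G^n(x)` where `G y = {1/y}`. -/
noncomputable def gaussIter (n : ℕ) (x : ℝ) : ℝ := (fun y => Int.fract y⁻¹)^[n] x

/-- `pq n x` is the `(n+1)`-st continued fraction partial quotient `a_{n+1}(x)`. -/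
noncomputable def pq (n : ℕ) (x : ℝ) : ℕ := ⌊(gaussIter n x)⁻¹⌋₊

/-- The rank-`k` cylinder `Δ(d_1, …, d_k)`, where `d i` stands for `d_{i+1}`. -/
noncomputable def cfCyl (k : ℕ) (d : ℕ → ℕ) : Set ℝ :=
  {x | x ∈ Set.Ioo (0 : ℝ) 1 ∧ Irrational x ∧ ∀ i < k, pq i x = d i}

/-- The constant-word cylinder `Δ_k(λ)`. -/
noncomputable def cfCylC (k : ℕ) (l : ℕ) : Set ℝ := cfCyl k (fun _ => l)

/-- τ(λ) = (λ + √(λ²+4))/2. -/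
noncomputable def tauCF (l : ℕ) : ℝ := (l + Real.sqrt (l ^ 2 + 4)) / 2

/-! The cylinder `Δ_k(λ)` is the image of the irrationals in `(0,1)` under the `k`-th iterate of the
inverse branch `t ↦ 1/(λ+t)` of the Gauss map. That iterate is the Möbius map
`t ↦ (p_k + p_{k-1} t)/(q_k + q_{k-1} t)` of determinant `±1`, so it shrinks `|t₁ - t₂|` by the factor
`(q_k + q_{k-1} t₁)(q_k + q_{k-1} t₂)`; hence the diameter is attained in the limit at the endpoints
`t = 0, 1` and equals `1/(q_k(q_k + q_{k-1}))`. Since `q_j` and `τ^j` obey the same recurrence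
`x_{j+2} = λ x_{j+1} + x_j`, comparing initial values gives `(λ/√(λ²+4)) τ^j ≤ q_j ≤ τ^j`, and both
bounds follow. -/

noncomputable def gaussBranch (l : ℕ) (t : ℝ) : ℝ := ((l : ℝ) + t)⁻¹

/-- `cfDenom l (j + 1)` is the convergent denominator `q_j` of `[0; l, l, …]`, and
`cfDenom l 0 = q_{-1}`. -/
noncomputable def cfDenom (l : ℕ) : ℕ → ℝ
  | 0 => 0
  | 1 => 1
  | n + 2 => l * cfDenom l (n + 1) + cfDenom l n

lemma pq_zero (x : ℝ) : pq 0 x = ⌊x⁻¹⌋₊ := rfl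

lemma pq_succ (i : ℕ) (x : ℝ) : pq (i + 1) x = pq i (Int.fract x⁻¹) := rfl

lemma cfCyl_succ {d : ℕ → ℕ} (hd : 1 ≤ d 0) (k : ℕ) :
    cfCyl (k + 1) d = gaussBranch (d 0) '' cfCyl k (fun i => d (i + 1)) := by
  have hd' : (1 : ℝ) ≤ d 0 := by exact_mod_cast hd
  ext x
  constructor
  · rintro ⟨hx, hirr, hpq⟩
    have hfloor : (⌊x⁻¹⌋₊ : ℝ) = d 0 := by rw [← pq_zero, hpq 0 k.succ_pos]
    have hfract : Int.fract x⁻¹ = x⁻¹ - d 0 := by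
      rw [Int.fract, ← hfloor, natCast_floor_eq_intCast_floor (inv_pos.2 hx.1).le]
    have hirr' : Irrational (Int.fract x⁻¹) := hfract ▸ hirr.inv.sub_natCast _
    refine ⟨Int.fract x⁻¹, ⟨⟨?_, Int.fract_lt_one _⟩, hirr', fun i hi => ?_⟩, ?_⟩
    · exact (Int.fract_nonneg _).lt_of_ne fun h => hirr'.ne_int 0 (by simp [← h])
    · rw [← pq_succ]; exact hpq (i + 1) (by omega)
    · rw [gaussBranch, hfract, add_sub_cancel, inv_inv]
  · rintro ⟨t, ⟨ht, htirr, hpq⟩, rfl⟩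
    have hinv : (gaussBranch (d 0) t)⁻¹ = d 0 + t := inv_inv _
    refine ⟨⟨inv_pos.2 (by linarith [ht.1]), inv_lt_one_of_one_lt₀ (by linarith [ht.1])⟩,
      (htirr.natCast_add _).inv, fun i hi => ?_⟩
    cases i with
    | zero =>
      rw [pq_zero, hinv, add_comm, Nat.floor_add_natCast ht.1.le, Nat.floor_eq_zero.2 ht.2,
        zero_add]
    | succ i =>
      rw [pq_succ, hinv, Int.fract_natCast_add, Int.fract_eq_self.2 ⟨ht.1.le, ht.2⟩]
      exact hpq i (by omega)

lemma closure_Ioo_inter_irrational {a b : ℝ} (hab : a ≠ b) :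
    closure (Set.Ioo a b ∩ {t | Irrational t}) = Set.Icc a b := by
  refine (closure_mono Set.inter_subset_left).trans_eq (closure_Ioo hab) |>.antisymm ?_
  rw [← closure_Ioo hab]
  exact closure_minimal (dense_irrational.open_subset_closure_inter isOpen_Ioo) isClosed_closure

lemma le_of_twoStep_recurrence {u v : ℕ → ℝ} {a : ℝ} (ha : 0 ≤ a)
    (hu : ∀ n, u (n + 2) ≤ a * u (n + 1) + u n) (hv : ∀ n, a * v (n + 1) + v n ≤ v (n + 2))
    (h₀ : u 0 ≤ v 0) (h₁ : u 1 ≤ v 1) (n : ℕ) : u n ≤ v n := by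
  induction n using Nat.twoStepInduction with
  | zero => exact h₀
  | one => exact h₁
  | more n ih₀ ih₁ => linarith [hu n, hv n, mul_le_mul_of_nonneg_left ih₁ ha]

section
variable {l : ℕ}

lemma cfCylC_eq_image_iterate (hl : 1 ≤ l) (k : ℕ) :
    cfCylC k l = (gaussBranch l)^[k] '' (Set.Ioo 0 1 ∩ {t | Irrational t}) := by
  induction k with
  | zero => ext x; simp [cfCylC, cfCyl]
  | succ k ih =>
    rw [cfCylC, cfCyl_succ hl, ← cfCylC, ih, Set.image_image, Function.iterate_succ']
    rfl

lemma gaussBranch_nonneg {t : ℝ} (ht : 0 ≤ t) : 0 ≤ gaussBranch l t := by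
  unfold gaussBranch; positivity

lemma continuousOn_gaussBranch (hl : 1 ≤ l) : ContinuousOn (gaussBranch l) (Set.Icc 0 1) := by
  have : (1 : ℝ) ≤ l := by exact_mod_cast hl
  exact ContinuousOn.inv₀ (by fun_prop) fun t ht => (by linarith [ht.1] : (0 : ℝ) < l + t).ne'

lemma mapsTo_gaussBranch (hl : 1 ≤ l) : Set.MapsTo (gaussBranch l) (Set.Icc 0 1) (Set.Icc 0 1) :=
  fun t ht => by
    have : (1 : ℝ) ≤ l := by exact_mod_cast hl
    exact ⟨gaussBranch_nonneg ht.1, inv_le_one_of_one_le₀ (by linarith [ht.1])⟩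

lemma cfDenom_nonneg : ∀ n, 0 ≤ cfDenom l n
  | 0 => le_rfl
  | 1 => zero_le_one
  | n + 2 => by
    have h₀ : 0 ≤ cfDenom l n := cfDenom_nonneg n
    have h₁ : 0 ≤ cfDenom l (n + 1) := cfDenom_nonneg (n + 1)
    rw [cfDenom]; positivity

lemma one_le_cfDenom_succ (hl : 1 ≤ l) : ∀ n, 1 ≤ cfDenom l (n + 1)
  | 0 => le_rfl
  | n + 1 => by
    have hl' : (1 : ℝ) ≤ l := by exact_mod_cast hl
    have ih := one_le_cfDenom_succ hl n
    rw [cfDenom]; nlinarith [cfDenom_nonneg (l := l) n]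

lemma dist_iterate_gaussBranch_mul (hl : 1 ≤ l) (n : ℕ) {t₁ t₂ : ℝ} (h₁ : 0 ≤ t₁)
    (h₂ : 0 ≤ t₂) :
    dist ((gaussBranch l)^[n] t₁) ((gaussBranch l)^[n] t₂) *
      ((cfDenom l (n + 1) + cfDenom l n * t₁) * (cfDenom l (n + 1) + cfDenom l n * t₂)) =
      dist t₁ t₂ := by
  have hl' : (1 : ℝ) ≤ l := by exact_mod_cast hl
  induction n generalizing t₁ t₂ with
  | zero => simp [cfDenom]
  | succ n ih =>
    have hstep : ∀ t, 0 ≤ t →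
        cfDenom l (n + 2) + cfDenom l (n + 1) * t =
          (cfDenom l (n + 1) + cfDenom l n * gaussBranch l t) * (l + t) := by
      intro t ht
      have : (l : ℝ) + t ≠ 0 := by linarith
      rw [cfDenom, gaussBranch]; field_simp; ring
    have hbase : dist (gaussBranch l t₁) (gaussBranch l t₂) * ((l + t₁) * (l + t₂)) =
        dist t₁ t₂ := by
      have h₁' : (0 : ℝ) < l + t₁ := by linarith
      have h₂' : (0 : ℝ) < l + t₂ := by linarith
      rw [Real.dist_eq, Real.dist_eq, gaussBranch, gaussBranch,
        ← abs_of_pos (mul_pos h₁' h₂'), ← abs_mul, abs_sub_comm t₁]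
      congr 1; field_simp; ring
    rw [Function.iterate_succ_apply, Function.iterate_succ_apply, hstep t₁ h₁, hstep t₂ h₂,
      ← hbase, ← ih (gaussBranch_nonneg h₁) (gaussBranch_nonneg h₂)]
    ring

lemma dist_iterate_gaussBranch_le (hl : 1 ≤ l) (n : ℕ) {t₁ t₂ : ℝ}
    (h₁ : t₁ ∈ Set.Icc (0 : ℝ) 1) (h₂ : t₂ ∈ Set.Icc (0 : ℝ) 1) :
    dist ((gaussBranch l)^[n] t₁) ((gaussBranch l)^[n] t₂) ≤
      (cfDenom l (n + 1) * (cfDenom l (n + 1) + cfDenom l n))⁻¹ := by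
  set Q := cfDenom l (n + 1)
  set P := cfDenom l n
  have hQ : 1 ≤ Q := one_le_cfDenom_succ hl n
  have hP : 0 ≤ P := cfDenom_nonneg n
  obtain ⟨h₁₀, h₁₁⟩ := h₁
  obtain ⟨h₂₀, h₂₁⟩ := h₂
  have hA : 0 < (Q + P * t₁) * (Q + P * t₂) := by positivity
  have key : dist t₁ t₂ * (Q * (Q + P)) ≤ (Q + P * t₁) * (Q + P * t₂) := by
    rw [Real.dist_eq]
    -- for `t₁ ≥ t₂` the difference of the two sides is `Q²(1 - t₁ + t₂) + 2QPt₂ + P²t₁t₂`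
    rcases abs_cases (t₁ - t₂) with ⟨h, _⟩ | ⟨h, _⟩ <;> rw [h] <;>
      nlinarith [mul_nonneg (mul_nonneg hP hP) (mul_nonneg h₁₀ h₂₀),
        mul_nonneg (mul_nonneg hP (zero_le_one.trans hQ)) h₁₀,
        mul_nonneg (mul_nonneg hP (zero_le_one.trans hQ)) h₂₀,
        mul_nonneg (mul_self_nonneg Q) (by linarith : 0 ≤ 1 - t₁ + t₂),
        mul_nonneg (mul_self_nonneg Q) (by linarith : 0 ≤ 1 - t₂ + t₁)]
  rw [← one_div, le_div_iff₀ (by positivity)]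
  refine le_of_mul_le_mul_right ?_ hA
  calc _ = dist t₁ t₂ * (Q * (Q + P)) := by
        rw [← dist_iterate_gaussBranch_mul hl n h₁₀ h₂₀]; ring
    _ ≤ _ := key
    _ = _ := (one_mul _).symm


theorem diam_cfCylC (hl : 1 ≤ l) (n : ℕ) :
    Metric.diam (cfCylC n l) = (cfDenom l (n + 1) * (cfDenom l (n + 1) + cfDenom l n))⁻¹ := by
  set S := Set.Ioo (0 : ℝ) 1 ∩ {t | Irrational t}
  have hcont : ContinuousOn (gaussBranch l)^[n] (closure S) := by
    rw [closure_Ioo_inter_irrational zero_ne_one]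
    exact (continuousOn_gaussBranch hl).iterate (mapsTo_gaussBranch hl) n
  have hpos : 0 < cfDenom l (n + 1) * (cfDenom l (n + 1) + cfDenom l n) := by
    have hq₁ := one_le_cfDenom_succ hl n
    have hq₀ := cfDenom_nonneg (l := l) n
    positivity
  rw [cfCylC_eq_image_iterate hl]
  refine le_antisymm (Metric.diam_le_of_forall_dist_le (by positivity) ?_) ?_
  · rintro _ ⟨t₁, h₁, rfl⟩ _ ⟨t₂, h₂, rfl⟩
    exact dist_iterate_gaussBranch_le hl n (Set.Ioo_subset_Icc_self h₁.1)
      (Set.Ioo_subset_Icc_self h₂.1)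
  · have hsub := hcont.image_closure
    have hbdd : Bornology.IsBounded ((gaussBranch l)^[n] '' closure S) := by
      refine (IsCompact.image_of_continuousOn ?_ hcont).isBounded
      rw [closure_Ioo_inter_irrational zero_ne_one]; exact isCompact_Icc
    have hmem : ∀ t ∈ Set.Icc (0 : ℝ) 1,
        (gaussBranch l)^[n] t ∈ closure ((gaussBranch l)^[n] '' S) :=
      fun t ht => hsub ⟨t, closure_Ioo_inter_irrational zero_ne_one ▸ ht, rfl⟩
    have hend := dist_iterate_gaussBranch_mul hl n (le_refl (0 : ℝ)) zero_le_one
    rw [← Metric.diam_closure]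
    calc _ = dist ((gaussBranch l)^[n] 0) ((gaussBranch l)^[n] 1) :=
          (eq_inv_of_mul_eq_one_left (by simpa using hend)).symm
      _ ≤ _ := Metric.dist_le_diam_of_mem (hbdd.subset (Set.image_mono subset_closure)).closure
          (hmem 0 ⟨le_rfl, zero_le_one⟩) (hmem 1 ⟨zero_le_one, le_rfl⟩)

end

section
variable (l : ℕ)

lemma tauCF_sq : tauCF l ^ 2 = l * tauCF l + 1 := by
  have := Real.sq_sqrt (by positivity : (0 : ℝ) ≤ l ^ 2 + 4)
  rw [tauCF]; linear_combination this / 4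

lemma natCast_le_sqrt_sq_add_four : (l : ℝ) ≤ √(l ^ 2 + 4) :=
  Real.le_sqrt_of_sq_le (by linarith)

lemma natCast_le_tauCF : (l : ℝ) ≤ tauCF l := by
  rw [tauCF]; linarith [natCast_le_sqrt_sq_add_four l]

lemma one_le_tauCF : 1 ≤ tauCF l := by
  have := tauCF_sq l
  nlinarith [natCast_le_tauCF l, (Nat.cast_nonneg l : (0 : ℝ) ≤ l)]

lemma tauCF_pow_add_two (n : ℕ) : tauCF l ^ (n + 2) = l * tauCF l ^ (n + 1) + tauCF l ^ n := by
  rw [pow_add, tauCF_sq]; ring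

lemma cfDenom_succ_le_tauCF_pow (n : ℕ) : cfDenom l (n + 1) ≤ tauCF l ^ n :=
  le_of_twoStep_recurrence (u := fun n => cfDenom l (n + 1)) (Nat.cast_nonneg l)
    (fun n => le_of_eq (by simp [cfDenom])) (fun n => (tauCF_pow_add_two l n).ge)
    (by simp [cfDenom]) (by simpa [cfDenom] using natCast_le_tauCF l) n

lemma mul_tauCF_pow_le_cfDenom_succ (n : ℕ) :
    l / √(l ^ 2 + 4) * tauCF l ^ n ≤ cfDenom l (n + 1) := by
  have hs : 0 < √((l : ℝ) ^ 2 + 4) := Real.sqrt_pos.2 (by positivity)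
  refine le_of_twoStep_recurrence (u := fun n => l / √(l ^ 2 + 4) * tauCF l ^ n)
    (v := fun n => cfDenom l (n + 1)) (Nat.cast_nonneg l)
    (fun n => le_of_eq (by rw [tauCF_pow_add_two]; ring))
    (fun n => le_of_eq (by simp [cfDenom])) ?_ ?_ n
  · simpa [cfDenom] using div_le_one_of_le₀ (natCast_le_sqrt_sq_add_four l) hs.le
  · have : tauCF l ≤ √(l ^ 2 + 4) := by rw [tauCF]; linarith [natCast_le_sqrt_sq_add_four l]
    simp only [cfDenom, pow_one, mul_one, add_zero]
    rw [div_mul_eq_mul_div, div_le_iff₀ hs]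
    exact mul_le_mul_of_nonneg_left this (Nat.cast_nonneg l)
end

/-- Two-sided bounds for the diameter of the constant-word cylinder `Δ_k(λ)`. -/
theorem diam_cfCylC_bounds (l : ℕ) (hl : 1 ≤ l) (k : ℕ) (hk : 1 ≤ k) :
    (tauCF l / (tauCF l + 1)) * tauCF l ^ (-(2 * k : ℤ)) ≤ Metric.diam (cfCylC k l) ∧
      Metric.diam (cfCylC k l) ≤
        (((l : ℝ) ^ 2 + 4) * tauCF l / ((tauCF l + 1) * (l : ℝ) ^ 2)) *
          tauCF l ^ (-(2 * k : ℤ)) := by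
  obtain ⟨n, rfl⟩ : ∃ n, k = n + 1 := ⟨k - 1, by omega⟩
  set τ := tauCF l
  have hτ : 0 < τ := one_pos.trans_le (one_le_tauCF l)
  have hzpow : τ ^ (-(2 * ((n + 1 : ℕ) : ℤ))) = (τ ^ (2 * n + 2))⁻¹ := by
    rw [zpow_neg]; norm_cast
  have hq₀ : 0 ≤ cfDenom l (n + 1) := cfDenom_nonneg (n + 1)
  have hq₁ : 0 < cfDenom l (n + 2) := one_pos.trans_le (one_le_cfDenom_succ hl (n + 1))
  have hD : 0 < cfDenom l (n + 2) * (cfDenom l (n + 2) + cfDenom l (n + 1)) := by positivity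
  rw [diam_cfCylC hl, hzpow]
  constructor
  · calc τ / (τ + 1) * (τ ^ (2 * n + 2))⁻¹ = (τ ^ (n + 1) * (τ ^ (n + 1) + τ ^ n))⁻¹ := by
          field_simp; ring
      _ ≤ _ := by gcongr <;> apply cfDenom_succ_le_tauCF_pow
  · set c := (l : ℝ) / √(l ^ 2 + 4)
    have hc : c ^ 2 = l ^ 2 / (l ^ 2 + 4) := by rw [div_pow, Real.sq_sqrt (by positivity)]
    have hl' : (0 : ℝ) < l := by exact_mod_cast hl
    calc _ ≤ (c * τ ^ (n + 1) * (c * τ ^ (n + 1) + c * τ ^ n))⁻¹ := by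
          gcongr <;> apply mul_tauCF_pow_le_cfDenom_succ
      _ = c⁻¹ ^ 2 * (τ / (τ + 1) * (τ ^ (2 * n + 2))⁻¹) := by field_simp; ring
      _ = _ := by rw [inv_pow, hc]; field_simp
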